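/- For every graph G on n vertices, minrank over F_2 of G is at most χ_l(complement of G) + 2·log_2 n (and in fact at most χ_l(complement of G) + ⌈log_2 n⌉). -/

import Mathlib

open Matrix

/-- An orthogonal representation of a graph `G` over a field `F` in dimension `t`. -/
def IsOrthRep {V F : Type*} [Field F] {t : ℕ} (G : SimpleGraph V) (u : V → Fin t → F) : Prop :=
  (∀ v, u v ⬝ᵥ u v ≠ 0) ∧ ∀ ⦃v w⦄, G.Adj v w → u v ⬝ᵥ u w = 0

/-- The representation has locality at most `ℓ`: the span of the vectors of every closed
neighborhood has dimension at most `ℓ`. -/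
def RepLocalityLE {V F : Type*} [Field F] {t : ℕ} (G : SimpleGraph V) (u : V → Fin t → F)
    (ℓ : ℕ) : Prop :=
  ∀ v, Module.finrank F (Submodule.span F (u '' insert v (G.neighborSet v))) ≤ ℓ

/-- The local orthogonality dimension of `G` over `F`. -/
noncomputable def locOrthDim {V : Type*} (G : SimpleGraph V) (F : Type*) [Field F] : ℕ :=
  sInf {ℓ | ∃ t : ℕ, ∃ u : V → Fin t → F, IsOrthRep G u ∧ RepLocalityLE G u ℓ}

/-- The orthogonality dimension of `G` over `F`. -/
noncomputable def orthDim {V : Type*} (G : SimpleGraph V) (F : Type*) [Field F] : ℕ :=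
  sInf {t | ∃ u : V → Fin t → F, IsOrthRep G u}

/-- An independent representation of `G` over `F`. -/
def IsIndRep {V F : Type*} [Field F] {t : ℕ} (G : SimpleGraph V) (u : V → Fin t → F) : Prop :=
  ∀ v, u v ∉ Submodule.span F (u '' G.neighborSet v)

/-- A proper coloring of `G`. -/
def IsProperColoring {V C : Type*} (G : SimpleGraph V) (c : V → C) : Prop :=
  ∀ ⦃v w⦄, G.Adj v w → c v ≠ c w

/-- The coloring has locality at most `ℓ`: at most `ℓ` colors in every closed neighborhood. -/
def ColoringLocalityLE {V C : Type*} (G : SimpleGraph V) (c : V → C) (ℓ : ℕ) : Prop :=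
  ∀ v, (c '' insert v (G.neighborSet v)).ncard ≤ ℓ

/-- The local chromatic number of `G`. -/
noncomputable def locChrom {V : Type*} (G : SimpleGraph V) : ℕ :=
  sInf {ℓ | ∃ c : V → ℕ, IsProperColoring G c ∧ ColoringLocalityLE G c ℓ}

/-- `M` represents the graph `G`. -/
def MatRepresents {V F : Type*} [Field F] (G : SimpleGraph V) (M : Matrix V V F) : Prop :=
  (∀ i, M i i ≠ 0) ∧ ∀ ⦃i j⦄, i ≠ j → ¬ G.Adj i j → M i j = 0

/-- The minrank of `G` over `F`. -/
noncomputable def minrank {V : Type*} [Fintype V] (F : Type*) [Field F] (G : SimpleGraph V) : ℕ :=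
  sInf {r | ∃ M : Matrix V V F, MatRepresents G M ∧ M.rank = r}

/-! Colour `Gᶜ` with at most `ℓ = χ_l(Gᶜ)` colours in every closed neighbourhood. Sending each
vertex to the standard basis vector of its colour gives an orthogonal representation `u` of `Gᶜ` over
`𝔽₂` in which every closed neighbourhood `N[v]` spans a subspace `W_v` of dimension at most `ℓ`.

With `m = ℓ + ⌈log₂ n⌉`, a random matrix `X` with `m` columns has `g ᵥ* X ≠ 0` for all nonzero
`g ∈ ⋃ W_v` simultaneously: there are fewer than `n · 2^ℓ ≤ 2^m` such `g`, and each one is killed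
with probability `2^{-m}`. Then `g ↦ g ᵥ* X` is injective on `W_v`, so the functional
`g ↦ u_v ⬝ᵥ g` on `W_v` factors as `g ↦ z_v ⬝ᵥ (g ᵥ* X)`. The matrix
`M v w = z_v ⬝ᵥ (u_w ᵥ* X)` has rank at most `m` and agrees with `u_v ⬝ᵥ u_w` for `w ∈ N[v]`,
hence represents `G`. -/

open Finset

section VecMul

variable {K n m : Type*} [Field K] [Fintype n]

theorem exists_dotProduct_vecMul_eq [Fintype m] {W : Submodule K (n → K)} {X : Matrix n m K}
    (hX : ∀ g ∈ W, g ᵥ* X = 0 → g = 0) (a : n → K) :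
    ∃ z : m → K, ∀ g ∈ W, z ⬝ᵥ (g ᵥ* X) = a ⬝ᵥ g := by
  classical
  have hinj : Function.Injective (X.vecMulLinear ∘ₗ W.subtype) := by
    rw [← LinearMap.ker_eq_bot, LinearMap.ker_eq_bot']
    exact fun g hg => Subtype.ext (hX g g.2 hg)
  obtain ⟨ψ, hψ⟩ := LinearMap.dualMap_surjective_of_injective hinj
    (dotProductEquiv K n a ∘ₗ W.subtype)
  refine ⟨(dotProductEquiv K m).symm ψ, fun g hg => ?_⟩
  have hg := LinearMap.congr_fun hψ ⟨g, hg⟩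
  rw [← (dotProductEquiv K m).apply_symm_apply ψ] at hg
  simpa only [LinearMap.dualMap_apply, LinearMap.comp_apply, dotProductEquiv_apply_apply,
    Submodule.subtype_apply, Matrix.coe_vecMulLinear] using hg

theorem card_vecMul_eq_zero_mul_card {g : n → K} (hg : g ≠ 0) :
    Nat.card {X : Matrix n m K // g ᵥ* X = 0} * Nat.card (m → K) = Nat.card (Matrix n m K) := by
  classical
  let f : Matrix n m K →+ (m → K) := AddMonoidHom.mk' (g ᵥ* ·) fun A B => vecMul_add A B g
  have hf : Function.Surjective f := by
    obtain ⟨j, hj⟩ : ∃ j, g j ≠ 0 := Function.ne_iff.mp hg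
    intro w
    refine ⟨vecMulVec (Pi.single j (g j)⁻¹) w, ?_⟩
    simp [f, vecMul_vecMulVec, dotProduct_single, hj]
  rw [← AddSubgroup.card_mul_index f.ker, AddSubgroup.index_ker,
    AddMonoidHom.range_eq_top.mpr hf, AddSubgroup.card_top]
  rfl

theorem exists_forall_vecMul_ne_zero [Fintype K] [Fintype m] {B : Finset (n → K)} (hB0 : 0 ∉ B)
    (hB : #B < Fintype.card K ^ Fintype.card m) :
    ∃ X : Matrix n m K, ∀ g ∈ B, g ᵥ* X ≠ 0 := by
  classical
  by_contra! hcover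
  have hsub : (univ : Finset (Matrix n m K)) ⊆ B.biUnion fun g => {X | g ᵥ* X = 0} := by
    intro X _
    obtain ⟨g, hg, hgX⟩ := hcover X
    exact mem_biUnion.mpr ⟨g, hg, by simpa using hgX⟩
  set q := Fintype.card K ^ Fintype.card m
  set N := Fintype.card (Matrix n m K)
  have hker : ∀ g ∈ B, #{X : Matrix n m K | g ᵥ* X = 0} * q = N := by
    intro g hg
    have := card_vecMul_eq_zero_mul_card (m := m) (ne_of_mem_of_not_mem hg hB0)
    rwa [Nat.card_eq_fintype_card, Fintype.card_subtype, Nat.card_eq_fintype_card,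
      Fintype.card_fun, Nat.card_eq_fintype_card] at this
  have hN : 0 < N := Fintype.card_pos
  have : N * q < q * N :=
    calc N * q ≤ (∑ g ∈ B, #{X : Matrix n m K | g ᵥ* X = 0}) * q := by
          gcongr
          exact (card_le_card hsub).trans card_biUnion_le
      _ = #B * N := by rw [sum_mul, sum_congr rfl hker, sum_const, smul_eq_mul]
      _ < q * N := by gcongr
  exact this.ne (mul_comm _ _)

end VecMul

theorem exists_matrix_vecMul_eq_zero_imp_eq_zero {K n ι : Type*} [Field K] [Fintype K] [Fintype n]
    [Fintype ι] (W : ι → Submodule K (n → K)) {ℓ : ℕ}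
    (hW : ∀ i, Module.finrank K (W i) ≤ ℓ) :
    ∃ X : Matrix n (Fin (ℓ + Nat.clog (Fintype.card K) (Fintype.card ι))) K,
      ∀ i, ∀ g ∈ W i, g ᵥ* X = 0 → g = 0 := by
  classical
  set q := Fintype.card K
  set r := Nat.clog q (Fintype.card ι)
  let B : Finset (n → K) := univ.biUnion fun i => ({g | g ∈ W i} : Finset _).erase 0
  have hW_card : ∀ i, #{g | g ∈ W i} = q ^ Module.finrank K (W i) := fun i => by
    rw [← Fintype.card_subtype, ← Module.card_eq_pow_finrank]
  have hB : #B < q ^ Fintype.card (Fin (ℓ + r)) := by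
    have hq : 1 < q := Fintype.one_lt_card
    calc #B ≤ ∑ i, (q ^ ℓ - 1) := card_biUnion_le.trans <| sum_le_sum fun i _ => by
            rw [card_erase_of_mem (by simp), hW_card]
            exact Nat.sub_le_sub_right (Nat.pow_le_pow_right hq.le (hW i)) 1
      _ ≤ q ^ r * (q ^ ℓ - 1) := by
            rw [sum_const, card_univ, smul_eq_mul]
            exact Nat.mul_le_mul_right _ (Nat.le_pow_clog hq _)
      _ < q ^ r * q ^ ℓ := Nat.mul_lt_mul_of_pos_left (Nat.sub_lt (by positivity) one_pos)
            (by positivity)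
      _ = q ^ Fintype.card (Fin (ℓ + r)) := by rw [Fintype.card_fin, ← pow_add, add_comm]
  obtain ⟨X, hX⟩ := exists_forall_vecMul_ne_zero (by simp [B]) hB
  refine ⟨X, fun i g hg hgX => by_contra fun hg0 => hX g ?_ hgX⟩
  exact mem_biUnion.mpr ⟨i, mem_univ i, mem_erase.mpr ⟨hg0, by simpa using hg⟩⟩

theorem minrank_le_rank {V F : Type*} [Fintype V] [Field F] {G : SimpleGraph V}
    {M : Matrix V V F} (hM : MatRepresents G M) : minrank F G ≤ M.rank :=
  Nat.sInf_le ⟨M, hM, rfl⟩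

theorem minrank_le_of_isOrthRep_compl {K V : Type*} [Field K] [Fintype K] [Fintype V]
    {G : SimpleGraph V} {t ℓ : ℕ} {u : V → Fin t → K} (hu : IsOrthRep Gᶜ u)
    (hloc : RepLocalityLE Gᶜ u ℓ) :
    minrank K G ≤ ℓ + Nat.clog (Fintype.card K) (Fintype.card V) := by
  obtain ⟨X, hX⟩ := exists_matrix_vecMul_eq_zero_imp_eq_zero
    (fun v => Submodule.span K (u '' insert v (Gᶜ.neighborSet v))) hloc
  choose z hz using fun v => exists_dotProduct_vecMul_eq (hX v) (u v)
  set M := of z * (of fun w => u w ᵥ* X)ᵀ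
  have hM : ∀ v w, w ∈ insert v (Gᶜ.neighborSet v) → M v w = u v ⬝ᵥ u w := fun v w hw =>
    hz v (u w) (Submodule.subset_span (Set.mem_image_of_mem u hw))
  have hrep : MatRepresents G M := by
    refine ⟨fun v => ?_, fun v w hne hnadj => ?_⟩
    · rw [hM v v (Set.mem_insert v _)]
      exact hu.1 v
    · have hadj : Gᶜ.Adj v w := (G.compl_adj v w).2 ⟨hne, hnadj⟩
      rw [hM v w (Set.mem_insert_of_mem v hadj)]
      exact hu.2 hadj
  calc minrank K G ≤ M.rank := minrank_le_rank hrep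
    _ ≤ (of z).rank := rank_mul_le_left _ _
    _ ≤ _ := by simpa using rank_le_card_width (of z)

theorem exists_isOrthRep_of_coloring {V : Type*} (K : Type*) [Field K] [Fintype V]
    {H : SimpleGraph V} {c : V → ℕ} {ℓ : ℕ} (hc : IsProperColoring H c)
    (hloc : ColoringLocalityLE H c ℓ) :
    ∃ t, ∃ u : V → Fin t → K, IsOrthRep H u ∧ RepLocalityLE H u ℓ := by
  obtain ⟨t, κ, rfl⟩ : ∃ t, ∃ κ : V → Fin t, c = Fin.val ∘ κ :=
    ⟨_, fun v => ⟨c v, Nat.lt_succ_of_le (le_sup (mem_univ v))⟩, rfl⟩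
  refine ⟨t, Pi.basisFun K (Fin t) ∘ κ, ⟨fun v => by simp, fun v w hvw => ?_⟩, fun v => ?_⟩
  · simpa [Pi.single_apply, Fin.val_inj] using (hc hvw).symm
  · refine le_of_eq_of_le ?_ (hloc v)
    rw [Set.image_comp, ← Pi.spanSubset, Pi.dim_spanSubset, Set.image_comp,
      Set.ncard_image_of_injective _ Fin.val_injective]

theorem exists_coloring_locality_locChrom {V : Type*} [Finite V] (H : SimpleGraph V) :
    ∃ c : V → ℕ, IsProperColoring H c ∧ ColoringLocalityLE H c (locChrom H) := by
  have hne : {ℓ | ∃ c : V → ℕ, IsProperColoring H c ∧ ColoringLocalityLE H c ℓ}.Nonempty := by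
    let e := Finite.equivFin V
    refine ⟨Nat.card V, fun v => e v,
      fun v w hvw hc => hvw.ne (e.injective (Fin.val_injective hc)), fun v => ?_⟩
    exact (Set.ncard_image_le (Set.toFinite _)).trans (Set.ncard_le_card _)
  exact Nat.sInf_mem hne

theorem Nat.clog_two_le_two_mul_logb (n : ℕ) : (Nat.clog 2 n : ℝ) ≤ 2 * Real.logb 2 n := by
  rcases Nat.lt_or_ge n 2 with hn | hn
  · interval_cases n <;> simp
  have hceil : (Nat.clog 2 n : ℝ) < Real.logb 2 n + 1 := by
    have h := Real.ceil_logb_natCast (b := 2) (r := n) (Nat.cast_nonneg n)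
    rw [Int.clog_natCast, Nat.cast_ofNat] at h
    exact_mod_cast h ▸ Int.ceil_lt_add_one (Real.logb 2 n)
  have hone : 1 ≤ Real.logb 2 n := by
    rw [Real.le_logb_iff_rpow_le one_lt_two (by positivity)]
    exact_mod_cast hn
  linarith

theorem minrank_F2_le_locChrom_compl_add_log {V : Type*} [Fintype V] (G : SimpleGraph V) :
    (minrank (ZMod 2) G : ℝ) ≤ locChrom Gᶜ + 2 * Real.logb 2 (Fintype.card V) ∧
    minrank (ZMod 2) G ≤ locChrom Gᶜ + Nat.clog 2 (Fintype.card V) := by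
  obtain ⟨c, hc, hcloc⟩ := exists_coloring_locality_locChrom Gᶜ
  obtain ⟨t, u, hu, huloc⟩ := exists_isOrthRep_of_coloring (ZMod 2) hc hcloc
  have h := minrank_le_of_isOrthRep_compl hu huloc
  rw [ZMod.card] at h
  refine ⟨?_, h⟩
  have hcast : (minrank (ZMod 2) G : ℝ) ≤ locChrom Gᶜ + Nat.clog 2 (Fintype.card V) := mod_cast h
  linarith [Nat.clog_two_le_two_mul_logb (Fintype.card V)]
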